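/- arXiv:1509.09172 — 3 statements merged into one kernel-verified Lean document; each statement's English description precedes it below -/
import Mathlib

section
/- Let g : (ℝ² \ {0}) → Sym₂(ℝ²) be defined by g_{ij}(y) = (1/2)·∂²(F²)/∂yⁱ∂yʲ(y) for a smooth F² : ℝ² \ {0} → ℝ that is positively homogeneous of degree 2 and has g(y) positive definite for all y ≠ 0. Fix constants A₁, A₂ ∈ ℝ, not both zero. Suppose the vector c(y) = (cⁱ(y)) defined by cⁱ(y) = Σⱼ gⁱʲ(y)·Aⱼ (where gⁱʲ is the inverse matrix of g_{ij}) is independent of y, i.e., there exist constants c¹, c² with Σⱼ gⁱʲ(y)Aⱼ = cⁱ for all y ≠ 0. Then F² is a quadratic form on ℝ², i.e., ∂³(F²)/∂yⁱ∂yʲ∂yᵏ = 0 on ℝ² \ {0}. -/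
open Filter Topology

/-- Directional (partial) derivative of a function on ℝ². -/
noncomputable def pd (v : ℝ × ℝ) (u : ℝ × ℝ → ℝ) (y : ℝ × ℝ) : ℝ := fderiv ℝ u y v

/-- Standard basis of ℝ². -/
def e : Fin 2 → ℝ × ℝ := ![(1, 0), (0, 1)]

/-- The fundamental tensor `g_{ij}(y) = (1/2)∂²F²/∂yⁱ∂yʲ`. -/
noncomputable def gmat (F2 : ℝ × ℝ → ℝ) (y : ℝ × ℝ) : Matrix (Fin 2) (Fin 2) ℝ :=
  fun i j => (1 / 2) * pd (e i) (pd (e j) F2) y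

namespace Stmt5Aux

lemma diffAt' {F : Type*} [NormedAddCommGroup F] [NormedSpace ℝ F] {u : ℝ × ℝ → F}
    {s : Set (ℝ × ℝ)} (hs : IsOpen s) (hu : ContDiffOn ℝ (⊤ : ℕ∞) u s) {y : ℝ × ℝ} (hy : y ∈ s) :
    DifferentiableAt ℝ u y :=
  (hu.contDiffAt (hs.mem_nhds hy)).differentiableAt (by simp)

lemma pd_contDiffOn {u : ℝ × ℝ → ℝ} {s : Set (ℝ × ℝ)} (hs : IsOpen s)
    (hu : ContDiffOn ℝ (⊤ : ℕ∞) u s) (v : ℝ × ℝ) : ContDiffOn ℝ (⊤ : ℕ∞) (pd v u) s :=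
  (hu.fderiv_of_isOpen hs (by simp)).clm_apply contDiffOn_const

lemma pd_congr {s : Set (ℝ × ℝ)} (hs : IsOpen s) {f g : ℝ × ℝ → ℝ}
    (h : ∀ z ∈ s, f z = g z) {y : ℝ × ℝ} (hy : y ∈ s) (v : ℝ × ℝ) :
    pd v f y = pd v g y := by
  unfold pd
  rw [Filter.EventuallyEq.fderiv_eq (Filter.eventuallyEq_of_mem (hs.mem_nhds hy) h)]

lemma pd_dir (u : ℝ × ℝ → ℝ) (y v : ℝ × ℝ) :
    pd v u y = v.1 * pd (e 0) u y + v.2 * pd (e 1) u y := by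
  have hv : v = v.1 • e 0 + v.2 • e 1 := by
    simp [e, Prod.ext_iff]
  unfold pd
  conv_lhs => rw [hv]
  rw [map_add, map_smul, map_smul, smul_eq_mul, smul_eq_mul]

lemma pd_comb {s : Set (ℝ × ℝ)} (hs : IsOpen s) {f g : ℝ × ℝ → ℝ}
    (hf : ContDiffOn ℝ (⊤ : ℕ∞) f s) (hg : ContDiffOn ℝ (⊤ : ℕ∞) g s) (a b : ℝ)
    {y : ℝ × ℝ} (hy : y ∈ s) (v : ℝ × ℝ) :
    pd v (fun z => a * f z + b * g z) y = a * pd v f y + b * pd v g y := by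
  unfold pd
  rw [fderiv_fun_add ((diffAt' hs hf hy).const_mul a) ((diffAt' hs hg hy).const_mul b),
    fderiv_const_mul (diffAt' hs hf hy) a, fderiv_const_mul (diffAt' hs hg hy) b]
  simp

lemma pd_pd_eq {u : ℝ × ℝ → ℝ} {s : Set (ℝ × ℝ)} (hs : IsOpen s) (hu : ContDiffOn ℝ (⊤ : ℕ∞) u s)
    {y : ℝ × ℝ} (hy : y ∈ s) (v w : ℝ × ℝ) :
    pd v (pd w u) y = fderiv ℝ (fderiv ℝ u) y v w := by
  have hdf : DifferentiableAt ℝ (fderiv ℝ u) y :=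
    diffAt' hs (hu.fderiv_of_isOpen hs (by simp)) hy
  have hkey : fderiv ℝ (fun z => (fderiv ℝ u z) w) y
      = (fderiv ℝ u y).comp (fderiv ℝ (fun _ : ℝ × ℝ => w) y)
        + (fderiv ℝ (fderiv ℝ u) y).flip w :=
    fderiv_clm_apply hdf (differentiableAt_const w)
  show fderiv ℝ (fun z => (fderiv ℝ u z) w) y v = _
  rw [hkey]
  simp

lemma pd_swap {u : ℝ × ℝ → ℝ} {s : Set (ℝ × ℝ)} (hs : IsOpen s) (hu : ContDiffOn ℝ (⊤ : ℕ∞) u s)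
    {y : ℝ × ℝ} (hy : y ∈ s) (v w : ℝ × ℝ) :
    pd v (pd w u) y = pd w (pd v u) y := by
  have hsymm := (hu.contDiffAt (hs.mem_nhds hy)).isSymmSndFDerivAt (by rw [minSmoothness_of_isRCLikeNormedField]; exact WithTop.coe_le_coe.mpr (le_top : (2 : ℕ∞) ≤ ⊤))
  rw [pd_pd_eq hs hu hy, pd_pd_eq hs hu hy, hsymm]

lemma pd_homog {u : ℝ × ℝ → ℝ} (hu : ContDiffOn ℝ (⊤ : ℕ∞) u {y : ℝ × ℝ | y ≠ 0}) {n : ℕ}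
    (h : ∀ t : ℝ, 0 < t → ∀ y : ℝ × ℝ, y ≠ 0 → u (t • y) = t ^ (n + 1) * u y) (v : ℝ × ℝ) :
    ∀ t : ℝ, 0 < t → ∀ y : ℝ × ℝ, y ≠ 0 → pd v u (t • y) = t ^ n * pd v u y := by
  intro t ht y hy
  have hty : t • y ≠ 0 := smul_ne_zero (ne_of_gt ht) hy
  have hdiff : DifferentiableAt ℝ u (t • y) := diffAt' isOpen_ne hu hty
  have hdiffy : DifferentiableAt ℝ u y := diffAt' isOpen_ne hu hy
  have hL : HasFDerivAt (fun z : ℝ × ℝ => t • z) (t • ContinuousLinearMap.id ℝ (ℝ × ℝ)) y :=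
    (hasFDerivAt_id y).const_smul t
  have hcomp : HasFDerivAt (fun z : ℝ × ℝ => u (t • z))
      ((fderiv ℝ u (t • y)).comp (t • ContinuousLinearMap.id ℝ (ℝ × ℝ))) y :=
    HasFDerivAt.comp y hdiff.hasFDerivAt hL
  have heqn : (fun z : ℝ × ℝ => u (t • z)) =ᶠ[nhds y] fun z => t ^ (n + 1) * u z :=
    Filter.eventuallyEq_of_mem (isOpen_ne.mem_nhds hy) (fun z hz => h t ht z hz)
  have hd1 : fderiv ℝ (fun z : ℝ × ℝ => u (t • z)) y
      = fderiv ℝ (fun z : ℝ × ℝ => t ^ (n + 1) * u z) y := heqn.fderiv_eq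
  have hR : fderiv ℝ (fun z : ℝ × ℝ => t ^ (n + 1) * u z) y = t ^ (n + 1) • fderiv ℝ u y :=
    fderiv_const_mul hdiffy _
  have h2 : fderiv ℝ (fun z : ℝ × ℝ => u (t • z)) y v = t * pd v u (t • y) := by
    rw [hcomp.fderiv]
    simp [pd, mul_comm]
  have h3 : fderiv ℝ (fun z : ℝ × ℝ => u (t • z)) y v = t ^ (n + 1) * pd v u y := by
    rw [hd1, hR]; simp [pd]
  have hkey : t * pd v u (t • y) = t * (t ^ n * pd v u y) := by
    rw [← h2, h3]; ring
  exact mul_left_cancel₀ (ne_of_gt ht) hkey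

lemma euler_zero {G : ℝ × ℝ → ℝ} (hG : ContDiffOn ℝ (⊤ : ℕ∞) G {y : ℝ × ℝ | y ≠ 0})
    (h : ∀ t : ℝ, 0 < t → ∀ y : ℝ × ℝ, y ≠ 0 → G (t • y) = G y) :
    ∀ y : ℝ × ℝ, y ≠ 0 → fderiv ℝ G y y = 0 := by
  intro y hy
  have hdiff : DifferentiableAt ℝ G y := diffAt' isOpen_ne hG hy
  have hc : HasDerivAt (fun t : ℝ => t • y) y 1 := by
    simpa using (hasDerivAt_id (1 : ℝ)).smul_const y
  have hf : HasFDerivAt G (fderiv ℝ G y) ((fun t : ℝ => t • y) 1) := by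
    simpa using hdiff.hasFDerivAt
  have hφ : HasDerivAt (fun t : ℝ => G (t • y)) (fderiv ℝ G y y) 1 :=
    hf.comp_hasDerivAt 1 hc
  have hev : (fun t : ℝ => G (t • y)) =ᶠ[nhds (1 : ℝ)] fun _ => G y := by
    filter_upwards [eventually_gt_nhds zero_lt_one] with t ht
    exact h t ht y hy
  have hφ' : HasDerivAt (fun t : ℝ => G (t • y)) 0 1 :=
    HasDerivAt.congr_of_eventuallyEq (hasDerivAt_const 1 (G y)) hev
  exact hφ.unique hφ'

lemma solve2 {c0 c1 y1 y2 p q : ℝ} (hdet : c0 * y2 - c1 * y1 ≠ 0)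
    (h1 : c0 * p + c1 * q = 0) (h2 : y1 * p + y2 * q = 0) : p = 0 ∧ q = 0 := by
  constructor
  · have hp : p * (c0 * y2 - c1 * y1) = 0 := by linear_combination y2 * h1 - c1 * h2
    exact (mul_eq_zero.mp hp).resolve_right hdet
  · have hq : q * (c0 * y2 - c1 * y1) = 0 := by linear_combination c0 * h2 - y1 * h1
    exact (mul_eq_zero.mp hq).resolve_right hdet

end Stmt5Aux

open Stmt5Aux in
/-- Fiberwise version of the paper's main theorem: if `gⁱʲ(y)Aⱼ` is a constant vector
for a nonzero covector `A`, then `F²` is a quadratic form. -/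
theorem stmt5 (F2 : ℝ × ℝ → ℝ) (hsm : ContDiffOn ℝ (⊤ : ℕ∞) F2 {y : ℝ × ℝ | y ≠ 0})
    (hhom : ∀ t : ℝ, 0 < t → ∀ y : ℝ × ℝ, y ≠ 0 → F2 (t • y) = t ^ 2 * F2 y)
    (hpos : ∀ y : ℝ × ℝ, y ≠ 0 → (gmat F2 y).PosDef)
    (A : Fin 2 → ℝ) (hA : A ≠ 0) (c : Fin 2 → ℝ)
    (hconst : ∀ y : ℝ × ℝ, y ≠ 0 → (gmat F2 y)⁻¹.mulVec A = c) :
    ∀ y : ℝ × ℝ, y ≠ 0 → ∀ i j k : Fin 2,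
      pd (e i) (pd (e j) (pd (e k) F2)) y = 0 := by
  -- smoothness of iterated derivatives
  have h1 : ∀ j : Fin 2, ContDiffOn ℝ (⊤ : ℕ∞) (pd (e j) F2) {y : ℝ × ℝ | y ≠ 0} :=
    fun j => pd_contDiffOn isOpen_ne hsm (e j)
  have h2 : ∀ i j : Fin 2, ContDiffOn ℝ (⊤ : ℕ∞) (pd (e i) (pd (e j) F2)) {y : ℝ × ℝ | y ≠ 0} :=
    fun i j => pd_contDiffOn isOpen_ne (h1 j) (e i)
  have h3 : ∀ i j k : Fin 2,
      ContDiffOn ℝ (⊤ : ℕ∞) (pd (e i) (pd (e j) (pd (e k) F2))) {y : ℝ × ℝ | y ≠ 0} :=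
    fun i j k => pd_contDiffOn isOpen_ne (h2 j k) (e i)
  -- g mulVec c = A
  have hgc : ∀ y : ℝ × ℝ, y ≠ 0 → (gmat F2 y).mulVec c = A := by
    intro y hy
    have hdet : IsUnit (gmat F2 y).det := isUnit_iff_ne_zero.mpr (ne_of_gt (hpos y hy).det_pos)
    rw [← hconst y hy, Matrix.mulVec_mulVec, Matrix.mul_nonsing_inv _ hdet, Matrix.one_mulVec]
  have hcne0 : c ≠ 0 := by
    intro h0
    apply hA
    have hy0 : ((1 : ℝ), (0 : ℝ)) ≠ (0 : ℝ × ℝ) := by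
      simp [Prod.ext_iff]
    have := hgc ((1 : ℝ), (0 : ℝ)) hy0
    rw [h0, Matrix.mulVec_zero] at this
    exact this.symm
  -- component equations: c0 ∂ᵢ∂₀F2 + c1 ∂ᵢ∂₁F2 = 2 Aᵢ
  have hAi : ∀ y : ℝ × ℝ, y ≠ 0 → ∀ i : Fin 2,
      c 0 * pd (e i) (pd (e 0) F2) y + c 1 * pd (e i) (pd (e 1) F2) y = 2 * A i := by
    intro y hy i
    have h := congrFun (hgc y hy) i
    simp [Matrix.mulVec, dotProduct, Fin.sum_univ_two, gmat] at h
    linarith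
  -- first constraint: differentiate the constant
  have heq1 : ∀ y : ℝ × ℝ, y ≠ 0 → ∀ i k : Fin 2,
      c 0 * pd (e k) (pd (e i) (pd (e 0) F2)) y
        + c 1 * pd (e k) (pd (e i) (pd (e 1) F2)) y = 0 := by
    intro y hy i k
    have hcomb := pd_comb isOpen_ne (h2 i 0) (h2 i 1) (c 0) (c 1) hy (e k)
    have hcg : pd (e k)
        (fun z => c 0 * pd (e i) (pd (e 0) F2) z + c 1 * pd (e i) (pd (e 1) F2) z) y
        = pd (e k) (fun _ => 2 * A i) y :=
      pd_congr isOpen_ne (fun z hz => hAi z hz i) hy (e k)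
    have hzero : pd (e k) (fun _ : ℝ × ℝ => 2 * A i) y = 0 := by
      simp [pd]
    rw [← hcomb, hcg, hzero]
  -- homogeneity of derivatives
  have hhom1 : ∀ j : Fin 2, ∀ t : ℝ, 0 < t → ∀ y : ℝ × ℝ, y ≠ 0 →
      pd (e j) F2 (t • y) = t ^ 1 * pd (e j) F2 y := by
    intro j
    exact pd_homog hsm (n := 1) (by intro t ht y hy; rw [hhom t ht y hy]) (e j)
  have hhom0 : ∀ i j : Fin 2, ∀ t : ℝ, 0 < t → ∀ y : ℝ × ℝ, y ≠ 0 →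
      pd (e i) (pd (e j) F2) (t • y) = pd (e i) (pd (e j) F2) y := by
    intro i j t ht y hy
    have := pd_homog (h1 j) (n := 0)
      (by intro t ht y hy; rw [hhom1 j t ht y hy]) (e i) t ht y hy
    simpa using this
  -- Euler: second constraint
  have heq2 : ∀ y : ℝ × ℝ, y ≠ 0 → ∀ i j : Fin 2,
      y.1 * pd (e 0) (pd (e i) (pd (e j) F2)) y
        + y.2 * pd (e 1) (pd (e i) (pd (e j) F2)) y = 0 := by
    intro y hy i j
    have heu := euler_zero (h2 i j) (fun t ht z hz => hhom0 i j t ht z hz) y hy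
    have : pd y (pd (e i) (pd (e j) F2)) y = 0 := heu
    rwa [pd_dir] at this
  -- symmetry
  have hsym12 : ∀ y : ℝ × ℝ, y ≠ 0 → ∀ p q r : Fin 2,
      pd (e p) (pd (e q) (pd (e r) F2)) y = pd (e q) (pd (e p) (pd (e r) F2)) y :=
    fun y hy p q r => pd_swap isOpen_ne (h1 r) hy (e p) (e q)
  have hsym23 : ∀ y : ℝ × ℝ, y ≠ 0 → ∀ p q r : Fin 2,
      pd (e p) (pd (e q) (pd (e r) F2)) y = pd (e p) (pd (e r) (pd (e q) F2)) y := by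
    intro y hy p q r
    exact pd_congr isOpen_ne
      (fun z hz => pd_swap isOpen_ne hsm hz (e q) (e r)) hy (e p)
  -- key: at independent points the third derivatives vanish
  have key : ∀ y : ℝ × ℝ, y ≠ 0 → c 0 * y.2 - c 1 * y.1 ≠ 0 →
      ∀ i j k : Fin 2, pd (e i) (pd (e j) (pd (e k) F2)) y = 0 := by
    intro y hy hdet
    have hb_alt : pd (e 1) (pd (e 0) (pd (e 0) F2)) y
        = pd (e 0) (pd (e 0) (pd (e 1) F2)) y := by
      rw [hsym12 y hy 1 0 0, hsym23 y hy 0 1 0]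
    have hb_alt2 : pd (e 0) (pd (e 1) (pd (e 0) F2)) y
        = pd (e 0) (pd (e 0) (pd (e 1) F2)) y := hsym23 y hy 0 1 0
    have hd_alt : pd (e 1) (pd (e 1) (pd (e 0) F2)) y
        = pd (e 0) (pd (e 1) (pd (e 1) F2)) y := by
      rw [hsym23 y hy 1 1 0, hsym12 y hy 1 0 1]
    have hd_alt2 : pd (e 1) (pd (e 0) (pd (e 1) F2)) y
        = pd (e 0) (pd (e 1) (pd (e 1) F2)) y := hsym12 y hy 1 0 1
    -- a, b
    have ea1 := heq1 y hy 0 0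
    have ea2 := heq2 y hy 0 0
    rw [hb_alt] at ea2
    obtain ⟨ha0, hb0⟩ := solve2 hdet ea1 ea2
    -- d
    have eb1 := heq1 y hy 1 0
    rw [hb_alt2] at eb1
    have eb2 := heq2 y hy 1 0
    rw [hb_alt2, hd_alt] at eb2
    obtain ⟨-, hd0⟩ := solve2 hdet eb1 eb2
    -- f
    have ec1 := heq1 y hy 1 1
    rw [hd_alt] at ec1
    have ec2 := heq2 y hy 1 1
    obtain ⟨-, hf0⟩ := solve2 hdet ec1 ec2
    -- all components
    have z010 : pd (e 0) (pd (e 1) (pd (e 0) F2)) y = 0 := by rw [hb_alt2]; exact hb0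
    have z100 : pd (e 1) (pd (e 0) (pd (e 0) F2)) y = 0 := by rw [hb_alt]; exact hb0
    have z101 : pd (e 1) (pd (e 0) (pd (e 1) F2)) y = 0 := by rw [hd_alt2]; exact hd0
    have z110 : pd (e 1) (pd (e 1) (pd (e 0) F2)) y = 0 := by rw [hd_alt]; exact hd0
    intro i j k
    fin_cases i <;> fin_cases j <;> fin_cases k <;>
      first
        | exact ha0 | exact hb0 | exact z010 | exact z100
        | exact hd0 | exact z101 | exact z110 | exact hf0
  -- general case via continuity
  intro y hy i j k
  by_cases hdet : c 0 * y.2 - c 1 * y.1 ≠ 0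
  · exact key y hy hdet i j k
  · push_neg at hdet
    have hcne : c 0 ^ 2 + c 1 ^ 2 ≠ 0 := by
      intro hzero
      apply hcne0
      have hc0 : c 0 = 0 := by nlinarith [sq_nonneg (c 0), sq_nonneg (c 1)]
      have hc1 : c 1 = 0 := by nlinarith [sq_nonneg (c 0), sq_nonneg (c 1)]
      funext m; fin_cases m <;> simpa
    set w : ℝ × ℝ := (-(c 1), c 0) with hw
    have hz : ∀ ε : ℝ, ε ≠ 0 →
        y + ε • w ≠ 0 ∧ c 0 * (y + ε • w).2 - c 1 * (y + ε • w).1 ≠ 0 := by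
      intro ε hε
      have hdet2 : c 0 * (y + ε • w).2 - c 1 * (y + ε • w).1 = ε * (c 0 ^ 2 + c 1 ^ 2) := by
        simp [hw, Prod.snd_add, Prod.fst_add, Prod.smul_snd, Prod.smul_fst, smul_eq_mul]
        linear_combination hdet
      have hne : c 0 * (y + ε • w).2 - c 1 * (y + ε • w).1 ≠ 0 := by
        rw [hdet2]; exact mul_ne_zero hε hcne
      refine ⟨?_, hne⟩
      intro heq0
      rw [heq0] at hne
      simp at hne
    have hTc : ContinuousOn (pd (e i) (pd (e j) (pd (e k) F2))) {y : ℝ × ℝ | y ≠ 0} :=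
      (h3 i j k).continuousOn
    have htend : Filter.Tendsto (fun ε : ℝ => y + ε • w) (𝓝[≠] (0 : ℝ))
        (𝓝[{y : ℝ × ℝ | y ≠ 0}] y) := by
      rw [tendsto_nhdsWithin_iff]
      constructor
      · have hco : Continuous (fun ε : ℝ => y + ε • w) :=
          continuous_const.add (continuous_id.smul continuous_const)
        have h00 := hco.tendsto 0
        simp only [zero_smul, add_zero] at h00
        exact h00.mono_left nhdsWithin_le_nhds
      · filter_upwards [self_mem_nhdsWithin] with ε hε
        exact (hz ε hε).1
    have h0 : Filter.Tendsto (fun ε : ℝ => pd (e i) (pd (e j) (pd (e k) F2)) (y + ε • w))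
        (𝓝[≠] (0 : ℝ)) (𝓝 (pd (e i) (pd (e j) (pd (e k) F2)) y)) :=
      (hTc y hy).tendsto.comp htend
    have h0' : Filter.Tendsto (fun ε : ℝ => pd (e i) (pd (e j) (pd (e k) F2)) (y + ε • w))
        (𝓝[≠] (0 : ℝ)) (𝓝 0) := by
      apply Filter.Tendsto.congr' _ tendsto_const_nhds
      filter_upwards [self_mem_nhdsWithin] with ε hε
      exact (key (y + ε • w) (hz ε hε).1 (hz ε hε).2 i j k).symm
    exact tendsto_nhds_unique h0 h0'
end

section
/- Let F² : ℝ² \ {0} → ℝ be smooth, positively homogeneous of degree 2, with g_{ij}(y) = (1/2)∂²F²/∂yⁱ∂yʲ positive definite for all y ≠ 0. Suppose there exist constants c¹, c², A₁, A₂ with (c¹, c²) ≠ (0,0) such that c¹·∂F²/∂y¹ + c²·∂F²/∂y² = 2A₁y¹ + 2A₂y² holds on ℝ² \ {0}, where additionally 2Aⱼ = Σᵢ cⁱ·∂²F²/∂yⁱ∂yʲ for all y ≠ 0. Then the Cartan torsion vanishes: ∂³F²/∂yⁱ∂yʲ∂yᵏ = 0 for all i, j, k on ℝ² \ {0}. 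-/
lemma hS : IsOpen {y : ℝ × ℝ | y ≠ 0} := isOpen_compl_singleton

lemma pd_smooth {u : ℝ × ℝ → ℝ} (hu : ContDiffOn ℝ (⊤ : ℕ∞) u {y : ℝ × ℝ | y ≠ 0}) (v : ℝ × ℝ) :
    ContDiffOn ℝ (⊤ : ℕ∞) (pd v u) {y : ℝ × ℝ | y ≠ 0} := by
  have h1 : ContDiffOn ℝ (⊤ : ℕ∞) (fderiv ℝ u) {y : ℝ × ℝ | y ≠ 0} := hu.fderiv_of_isOpen hS (by simp)
  exact h1.clm_apply contDiffOn_const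

lemma diffAt {u : ℝ × ℝ → ℝ} (hu : ContDiffOn ℝ (⊤ : ℕ∞) u {y : ℝ × ℝ | y ≠ 0}) {y : ℝ × ℝ}
    (hy : y ≠ 0) : DifferentiableAt ℝ u y :=
  ((hu.contDiffAt (hS.mem_nhds hy)).differentiableAt (by simp))

lemma pd_hom {u : ℝ × ℝ → ℝ} (hu : ContDiffOn ℝ (⊤ : ℕ∞) u {y : ℝ × ℝ | y ≠ 0}) (φ : ℝ → ℝ)
    (h : ∀ t : ℝ, 0 < t → ∀ y : ℝ × ℝ, y ≠ 0 → u (t • y) = φ t * u y) :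
    ∀ t : ℝ, 0 < t → ∀ y : ℝ × ℝ, y ≠ 0 → ∀ v,
      t * pd v u (t • y) = φ t * pd v u y := by
  intro t ht y hy v
  have hty : t • y ≠ 0 := smul_ne_zero (ne_of_gt ht) hy
  have hd1 : DifferentiableAt ℝ u (t • y) := diffAt hu hty
  have hd2 : DifferentiableAt ℝ u y := diffAt hu hy
  have hL : HasFDerivAt (fun z : ℝ × ℝ => u (t • z))
      ((fderiv ℝ u (t • y)).comp (t • ContinuousLinearMap.id ℝ (ℝ × ℝ))) y := by
    have hid : HasFDerivAt (fun z : ℝ × ℝ => t • z)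
        (t • ContinuousLinearMap.id ℝ (ℝ × ℝ)) y := (hasFDerivAt_id y).const_smul t
    exact hd1.hasFDerivAt.comp y hid
  have hR : HasFDerivAt (fun z : ℝ × ℝ => φ t * u z) (φ t • fderiv ℝ u y) y :=
    hd2.hasFDerivAt.const_mul (φ t)
  have heq : (fun z : ℝ × ℝ => u (t • z)) =ᶠ[nhds y] (fun z : ℝ × ℝ => φ t * u z) :=
    Filter.eventuallyEq_of_mem (hS.mem_nhds hy) (fun z hz => h t ht z hz)
  have := (hR.congr_of_eventuallyEq heq).unique hL
  have h2 := congrArg (fun (L : (ℝ × ℝ) →L[ℝ] ℝ) => L v) this.symm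
  simpa [pd, mul_comm] using h2

lemma euler_zero {u : ℝ × ℝ → ℝ} (hu : ContDiffOn ℝ (⊤ : ℕ∞) u {y : ℝ × ℝ | y ≠ 0})
    (h : ∀ t : ℝ, 0 < t → ∀ y : ℝ × ℝ, y ≠ 0 → u (t • y) = u y) :
    ∀ y : ℝ × ℝ, y ≠ 0 → fderiv ℝ u y y = 0 := by
  intro y hy
  have hd : DifferentiableAt ℝ u y := diffAt hu hy
  have h1 : HasDerivAt (fun t : ℝ => t • y) y 1 := by
    simpa using (hasDerivAt_id (1 : ℝ)).smul_const y
  have hd' : HasFDerivAt u (fderiv ℝ u y) ((1:ℝ) • y) := by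
    rw [one_smul]; exact hd.hasFDerivAt
  have h2 : HasDerivAt (fun t : ℝ => u (t • y)) (fderiv ℝ u y y) 1 := by
    exact hd'.comp_hasDerivAt 1 h1
  have heq : (fun t : ℝ => u (t • y)) =ᶠ[nhds (1 : ℝ)] (fun _ => u y) := by
    filter_upwards [eventually_gt_nhds (by norm_num : (0:ℝ) < 1)] with t ht
    exact h t ht y hy
  have h3 : HasDerivAt (fun t : ℝ => u (t • y)) 0 1 :=
    (hasDerivAt_const (1:ℝ) (u y)).congr_of_eventuallyEq heq
  exact h2.unique h3

lemma pd_swap {h : ℝ × ℝ → ℝ} (hh : ContDiffOn ℝ (⊤ : ℕ∞) h {y : ℝ × ℝ | y ≠ 0}) {y : ℝ × ℝ}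
    (hy : y ≠ 0) (a b : ℝ × ℝ) : pd a (pd b h) y = pd b (pd a h) y := by
  have hAt : ContDiffAt ℝ (⊤ : ℕ∞) h y := hh.contDiffAt (hS.mem_nhds hy)
  have hsym : IsSymmSndFDerivAt ℝ h y := hAt.isSymmSndFDerivAt (by simp; exact WithTop.coe_le_coe.mpr le_top)
  have hfd : DifferentiableAt ℝ (fderiv ℝ h) y :=
    (hAt.fderiv_right (m := (⊤ : ℕ∞)) (by simp)).differentiableAt (by simp)
  have key : ∀ v w : ℝ × ℝ, pd v (pd w h) y = fderiv ℝ (fderiv ℝ h) y v w := by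
    intro v w
    have h0 : fderiv ℝ (fun z => (fderiv ℝ h z) w) y
        = (fderiv ℝ h y).comp (fderiv ℝ (fun _ : ℝ × ℝ => w) y)
          + (fderiv ℝ (fderiv ℝ h) y).flip w :=
      fderiv_clm_apply hfd (differentiableAt_const w)
    calc pd v (pd w h) y = fderiv ℝ (fun z => (fderiv ℝ h z) w) y v := rfl
      _ = fderiv ℝ (fderiv ℝ h) y v w := by rw [h0]; simp
  rw [key a b, key b a, hsym a b]

/-- The PDE step of the paper's main theorem: vanishing of the Cartan torsion. -/
theorem stmt7 (F2 : ℝ × ℝ → ℝ) (hsm : ContDiffOn ℝ (⊤ : ℕ∞) F2 {y : ℝ × ℝ | y ≠ 0})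
    (hhom : ∀ t : ℝ, 0 < t → ∀ y : ℝ × ℝ, y ≠ 0 → F2 (t • y) = t ^ 2 * F2 y)
    (hpos : ∀ y : ℝ × ℝ, y ≠ 0 →
      (Matrix.of fun i j : Fin 2 => (1 / 2) * pd (e i) (pd (e j) F2) y).PosDef)
    (c A : Fin 2 → ℝ) (hc : c ≠ 0)
    (hpde : ∀ y : ℝ × ℝ, y ≠ 0 →
      c 0 * pd (e 0) F2 y + c 1 * pd (e 1) F2 y = 2 * A 0 * y.1 + 2 * A 1 * y.2)
    (hconst : ∀ y : ℝ × ℝ, y ≠ 0 → ∀ j : Fin 2,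
      2 * A j = ∑ i, c i * pd (e i) (pd (e j) F2) y) :
    ∀ y : ℝ × ℝ, y ≠ 0 → ∀ i j k : Fin 2,
      pd (e i) (pd (e j) (pd (e k) F2)) y = 0 := by
  -- smoothness of derivatives
  have hsm1 : ∀ v, ContDiffOn ℝ (⊤ : ℕ∞) (pd v F2) {y : ℝ × ℝ | y ≠ 0} := fun v => pd_smooth hsm v
  have hsm2 : ∀ w v, ContDiffOn ℝ (⊤ : ℕ∞) (pd w (pd v F2)) {y : ℝ × ℝ | y ≠ 0} :=
    fun w v => pd_smooth (hsm1 v) w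
  -- homogeneity of degree 1 of first derivatives
  have hom1 : ∀ v, ∀ t : ℝ, 0 < t → ∀ z : ℝ × ℝ, z ≠ 0 → pd v F2 (t • z) = t * pd v F2 z := by
    intro v t ht z hz
    have h2 := pd_hom hsm (fun t => t ^ 2) hhom t ht z hz v
    have h3 : t * pd v F2 (t • z) = t * (t * pd v F2 z) := by rw [h2]; ring
    exact mul_left_cancel₀ (ne_of_gt ht) h3
  -- homogeneity of degree 0 of second derivatives
  have hom2 : ∀ w v, ∀ t : ℝ, 0 < t → ∀ z : ℝ × ℝ, z ≠ 0 →
      pd w (pd v F2) (t • z) = pd w (pd v F2) z := by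
    intro w v t ht z hz
    have h2 := pd_hom (hsm1 v) (fun t => t) (fun t ht z hz => hom1 v t ht z hz) t ht z hz w
    exact mul_left_cancel₀ (ne_of_gt ht) h2
  -- Euler: second derivatives are 0-homogeneous, so radial derivative vanishes
  have euler2 : ∀ j k : Fin 2, ∀ z : ℝ × ℝ, z ≠ 0 →
      fderiv ℝ (pd (e j) (pd (e k) F2)) z z = 0 := by
    intro j k z hz
    exact euler_zero (hsm2 (e j) (e k)) (fun t ht z hz => hom2 (e j) (e k) t ht z hz) z hz
  -- differentiating the constancy relation
  have crel : ∀ k : Fin 2, ∀ z : ℝ × ℝ, z ≠ 0 → ∀ v : ℝ × ℝ,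
      c 0 * pd v (pd (e 0) (pd (e k) F2)) z + c 1 * pd v (pd (e 1) (pd (e k) F2)) z = 0 := by
    intro k z hz v
    have d0 : DifferentiableAt ℝ (pd (e 0) (pd (e k) F2)) z := diffAt (hsm2 (e 0) (e k)) hz
    have d1 : DifferentiableAt ℝ (pd (e 1) (pd (e k) F2)) z := diffAt (hsm2 (e 1) (e k)) hz
    have heq : (fun z => c 0 * pd (e 0) (pd (e k) F2) z + c 1 * pd (e 1) (pd (e k) F2) z)
        =ᶠ[nhds z] (fun _ => 2 * A k) := by
      filter_upwards [hS.mem_nhds hz] with w hw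
      have := hconst w hw k
      rw [Fin.sum_univ_two] at this
      exact this.symm
    have hf0 : fderiv ℝ (fun z => c 0 * pd (e 0) (pd (e k) F2) z
        + c 1 * pd (e 1) (pd (e k) F2) z) z = 0 := by
      rw [heq.fderiv_eq]
      exact fderiv_const_apply _
    have hf1 : fderiv ℝ (fun z => c 0 * pd (e 0) (pd (e k) F2) z
        + c 1 * pd (e 1) (pd (e k) F2) z) z
        = c 0 • fderiv ℝ (pd (e 0) (pd (e k) F2)) z
          + c 1 • fderiv ℝ (pd (e 1) (pd (e k) F2)) z := by
      rw [fderiv_fun_add (d0.const_mul (c 0)) (d1.const_mul (c 1)),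
        fderiv_const_mul d0 (c 0), fderiv_const_mul d1 (c 1)]
    have h2 := congrArg (fun (L : (ℝ × ℝ) →L[ℝ] ℝ) => L v) (hf1.symm.trans hf0)
    simpa [pd] using h2
  -- the key pointwise vanishing, assuming z and c are linearly independent
  have key : ∀ z : ℝ × ℝ, z ≠ 0 → z.1 * c 1 - z.2 * c 0 ≠ 0 → ∀ i j k : Fin 2,
      pd (e i) (pd (e j) (pd (e k) F2)) z = 0 := by
    intro z hz hd i j k
    set L := fderiv ℝ (pd (e j) (pd (e k) F2)) z with hL
    have hLz : L z = 0 := euler2 j k z hz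
    have hLc : L (c 0, c 1) = 0 := by
      have hc' : ((c 0, c 1) : ℝ × ℝ) = c 0 • (e 0) + c 1 • (e 1) := by
        simp [e]
      have s0 : L (e 0) = pd (e j) (pd (e 0) (pd (e k) F2)) z := by
        have : L (e 0) = pd (e 0) (pd (e j) (pd (e k) F2)) z := rfl
        rw [this, pd_swap (hsm1 (e k)) hz (e 0) (e j)]
      have s1 : L (e 1) = pd (e j) (pd (e 1) (pd (e k) F2)) z := by
        have : L (e 1) = pd (e 1) (pd (e j) (pd (e k) F2)) z := rfl
        rw [this, pd_swap (hsm1 (e k)) hz (e 1) (e j)]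
      rw [hc', map_add, map_smul, map_smul, smul_eq_mul, smul_eq_mul, s0, s1]
      exact crel k z hz (e j)
    have goal : ∀ i : Fin 2, L (e i) = 0 := by
      intro i
      have key0 : ∀ vv : ℝ × ℝ, vv = c 1 • z - z.2 • ((c 0 : ℝ), (c 1 : ℝ))
            ∨ vv = z.1 • ((c 0 : ℝ), (c 1 : ℝ)) - c 0 • z → L vv = 0 := by
        rintro vv (rfl | rfl) <;>
          rw [map_sub, map_smul, map_smul, hLz, hLc] <;> simp
      have hmul : (z.1 * c 1 - z.2 * c 0) * L (e i) = 0 := by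
        fin_cases i
        · show (z.1 * c 1 - z.2 * c 0) * L (e 0) = 0
          have he : c 1 • z - z.2 • ((c 0 : ℝ), (c 1 : ℝ))
              = (z.1 * c 1 - z.2 * c 0) • (e 0) := by
            refine Prod.ext ?_ ?_ <;> simp [e] <;> ring
          have h5 := key0 _ (Or.inl rfl)
          rw [he, map_smul] at h5
          simpa using h5
        · show (z.1 * c 1 - z.2 * c 0) * L (e 1) = 0
          have he : z.1 • ((c 0 : ℝ), (c 1 : ℝ)) - c 0 • z
              = (z.1 * c 1 - z.2 * c 0) • (e 1) := by
            refine Prod.ext ?_ ?_ <;> simp [e] <;> ring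
          have h5 := key0 _ (Or.inr rfl)
          rw [he, map_smul] at h5
          simpa using h5
      exact (mul_eq_zero.mp hmul).resolve_left hd
    exact goal i
  -- conclude by continuity
  intro y hy i j k
  by_cases hdy : y.1 * c 1 - y.2 * c 0 ≠ 0
  · exact key y hy hdy i j k
  push_neg at hdy
  have hcc : c 0 ≠ 0 ∨ c 1 ≠ 0 := by
    by_contra h
    push_neg at h
    exact hc (by funext i; fin_cases i <;> simp [h.1, h.2])
  have hnorm : c 0 ^ 2 + c 1 ^ 2 ≠ 0 := by
    rcases hcc with h | h <;> positivity
  set Φ := pd (e i) (pd (e j) (pd (e k) F2)) with hΦ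
  have hcont : ContinuousAt Φ y :=
    ((pd_smooth (hsm2 (e j) (e k)) (e i)).continuousOn).continuousAt (hS.mem_nhds hy)
  set w : ℝ × ℝ := (-(c 1), c 0) with hw
  set p : ℝ → ℝ × ℝ := fun t => y + t • w with hp
  have hzero : ∀ t : ℝ, t ≠ 0 → Φ (p t) = 0 := by
    intro t ht
    have hdet : (p t).1 * c 1 - (p t).2 * c 0 ≠ 0 := by
      have h1 : (p t).1 = y.1 + t * (-(c 1)) := by simp [hp, hw]
      have h2 : (p t).2 = y.2 + t * c 0 := by simp [hp, hw]
      have hcomp : (p t).1 * c 1 - (p t).2 * c 0 = -(t * (c 0 ^ 2 + c 1 ^ 2)) := by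
        rw [h1, h2]; linear_combination hdy
      rw [hcomp]
      exact neg_ne_zero.mpr (mul_ne_zero ht hnorm)
    have hpt : p t ≠ 0 := by
      intro h0
      rw [h0] at hdet
      simp at hdet
    exact key (p t) hpt hdet i j k
  have hptend : Filter.Tendsto p (nhdsWithin 0 {(0:ℝ)}ᶜ) (nhds y) := by
    have hcp : Continuous p := continuous_const.add (continuous_id.smul continuous_const)
    have h4 : Filter.Tendsto p (nhdsWithin (0:ℝ) {(0:ℝ)}ᶜ) (nhds (p 0)) :=
      (hcp.tendsto 0).mono_left (nhdsWithin_le_nhds (s := {(0:ℝ)}ᶜ))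
    simpa [hp] using h4
  have h1 : Filter.Tendsto (Φ ∘ p) (nhdsWithin 0 {(0:ℝ)}ᶜ) (nhds (Φ y)) :=
    hcont.tendsto.comp hptend
  have h2 : Filter.Tendsto (Φ ∘ p) (nhdsWithin 0 {(0:ℝ)}ᶜ) (nhds 0) := by
    apply Filter.Tendsto.congr' _ tendsto_const_nhds
    filter_upwards [self_mem_nhdsWithin] with t ht
    exact (hzero t ht).symm
  exact tendsto_nhds_unique h1 h2
end

section
/- Let u : ℝ² → ℝ be a C² function satisfying c¹ u_{y¹} + c² u_{y²} = 2A₁y¹ + 2A₂y² with c¹, c² ≠ 0, and suppose u is positively homogeneous of degree 2 on ℝ² \ {0}. Then u is a polynomial of degree at most 2 in (y¹, y²) with no constant or linear terms; explicitly u(y) = (A₁/c¹)(y¹)² + (A₂/c²)(y²)² + a(c²y¹ − c¹y²)² for some a ∈ ℝ. -/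
open Set Filter Topology

theorem deriv_deriv_eq_of_eventuallyEq_mul_sq {f : ℝ → ℝ} {x a : ℝ}
    (h : f =ᶠ[𝓝 x] fun x => a * x ^ 2) : deriv (deriv f) x = 2 * a := by
  rw [h.deriv.deriv_eq]
  simp [mul_comm]

def IsPosHomogeneous {E : Type*} [AddCommMonoid E] [Module ℝ E] (k : ℕ) (f : E → ℝ) : Prop :=
  ∀ t : ℝ, 0 < t → ∀ y, f (t • y) = t ^ k * f y

namespace IsPosHomogeneous

variable {E : Type*} [AddCommMonoid E] [Module ℝ E] {k : ℕ} {f g : E → ℝ}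

theorem of_ne_zero [TopologicalSpace E] [ContinuousSMul ℝ E] [Nontrivial E] (hf : Continuous f)
    (hk : k ≠ 0) (h : ∀ t : ℝ, 0 < t → ∀ y, y ≠ 0 → f (t • y) = t ^ k * f y) :
    IsPosHomogeneous k f := by
  obtain ⟨y, hy⟩ := exists_ne (0 : E)
  have hray : EqOn (fun t : ℝ => f (t • y)) (fun t => t ^ k * f y) (Ioi 0) :=
    fun t ht => h t ht y hy
  have hf0 : f 0 = 0 := by
    simpa [zero_pow hk] using
      hray.closure (by fun_prop) (by fun_prop) (by simp : (0 : ℝ) ∈ closure (Ioi 0))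
  intro t ht x
  rcases eq_or_ne x 0 with rfl | hx
  · simp [hf0]
  · exact h t ht x hx

theorem sub (hf : IsPosHomogeneous k f) (hg : IsPosHomogeneous k g) :
    IsPosHomogeneous k (f - g) := fun t ht y => by
  simp only [Pi.sub_apply, hf t ht y, hg t ht y, mul_sub]

theorem comp_smul_right (hf : IsPosHomogeneous k f) (v : E) :
    IsPosHomogeneous k (fun r : ℝ => f (r • v)) := fun t ht r => by
  simp only [smul_eq_mul, mul_smul, hf t ht]

theorem map_zero (hf : IsPosHomogeneous k f) (hk : k ≠ 0) : f 0 = 0 := by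
  have h := hf 2 two_pos 0
  rw [smul_zero] at h
  exact eq_zero_of_mul_eq_self_left (one_lt_pow₀ one_lt_two hk).ne' h.symm

theorem eq_of_pos {ψ : ℝ → ℝ} (hψ : IsPosHomogeneous k ψ) {r : ℝ} (hr : 0 < r) :
    ψ r = ψ 1 * r ^ k := by
  simpa [mul_comm] using hψ r hr 1

theorem eq_of_neg {ψ : ℝ → ℝ} (hψ : IsPosHomogeneous k ψ) {r : ℝ} (hr : r < 0) :
    ψ r = ψ (-1) * (-r) ^ k := by
  simpa [mul_comm] using hψ (-r) (neg_pos.2 hr) (-1)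

theorem eq_mul_sq {ψ : ℝ → ℝ} (hψ : IsPosHomogeneous 2 ψ) (hψ2 : ContDiff ℝ 2 ψ) (r : ℝ) :
    ψ r = ψ 1 * r ^ 2 := by
  have hψ'' : Continuous (deriv (deriv ψ)) := by
    simpa [iteratedDeriv_eq_iterate] using hψ2.continuous_iteratedDeriv' 2
  have hright : EqOn (deriv (deriv ψ)) (fun _ => 2 * ψ 1) (Ioi 0) := fun x hx =>
    deriv_deriv_eq_of_eventuallyEq_mul_sq <|
      eventually_of_mem (Ioi_mem_nhds hx) fun y hy => hψ.eq_of_pos hy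
  have hleft : EqOn (deriv (deriv ψ)) (fun _ => 2 * ψ (-1)) (Iio 0) := fun x hx =>
    deriv_deriv_eq_of_eventuallyEq_mul_sq <|
      eventually_of_mem (Iio_mem_nhds hx) fun y hy => by rw [hψ.eq_of_neg hy, neg_sq]
  have hsymm : ψ (-1) = ψ 1 := by
    have h1 := hright.closure hψ'' continuous_const (by simp : (0 : ℝ) ∈ closure (Ioi 0))
    have h2 := hleft.closure hψ'' continuous_const (by simp : (0 : ℝ) ∈ closure (Iio 0))
    linarith
  rcases lt_trichotomy r 0 with hr | rfl | hr
  · rw [hψ.eq_of_neg hr, hsymm, neg_sq]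
  · simp [hψ.map_zero two_ne_zero]
  · exact hψ.eq_of_pos hr

end IsPosHomogeneous

theorem apply_add_smul_eq_of_fderiv_apply_eq_zero {E F : Type*} [NormedAddCommGroup E]
    [NormedSpace ℝ E] [NormedAddCommGroup F] [NormedSpace ℝ F] {w : E → F} {d : E}
    (hw : Differentiable ℝ w) (h : ∀ y, fderiv ℝ w y d = 0) (y : E) (s : ℝ) :
    w (y + s • d) = w y := by
  have hline : ∀ s : ℝ, HasDerivAt (fun s : ℝ => w (y + s • d)) 0 s := fun s => by
    simpa [h, Function.comp_def] using (hw _).hasFDerivAt.comp_hasDerivAt s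
      (((hasDerivAt_id s).smul_const d).const_add y)
  simpa using is_const_of_deriv_eq_zero (fun s => (hline s).differentiableAt)
    (fun s => (hline s).deriv) s 0

def diagQuad (a b : ℝ) (y : ℝ × ℝ) : ℝ := a * y.1 ^ 2 + b * y.2 ^ 2

theorem contDiff_diagQuad (a b : ℝ) {n : WithTop ℕ∞} : ContDiff ℝ n (diagQuad a b) := by
  unfold diagQuad; fun_prop

theorem isPosHomogeneous_diagQuad (a b : ℝ) : IsPosHomogeneous 2 (diagQuad a b) :=
  fun t _ y => by simp only [diagQuad, Prod.smul_fst, Prod.smul_snd, smul_eq_mul]; ring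

theorem fderiv_diagQuad_apply (a b : ℝ) (y v : ℝ × ℝ) :
    fderiv ℝ (diagQuad a b) y v = 2 * a * y.1 * v.1 + 2 * b * y.2 * v.2 := by
  have h1 := (hasFDerivAt_fst (𝕜 := ℝ) (p := y)).pow 2 |>.const_mul a
  have h2 := (hasFDerivAt_snd (𝕜 := ℝ) (p := y)).pow 2 |>.const_mul b
  rw [HasFDerivAt.fderiv (f := diagQuad a b) (h1.add h2)]
  simp only [Nat.add_one_sub_one, pow_one, nsmul_eq_mul, Nat.cast_ofNat, add_apply, smul_apply,
    ContinuousLinearMap.coe_fst', ContinuousLinearMap.coe_snd', smul_eq_mul]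
  ring

theorem fderiv_apply_eq_pd (u : ℝ × ℝ → ℝ) (y : ℝ × ℝ) (c1 c2 : ℝ) :
    fderiv ℝ u y (c1, c2) = c1 * pd (1, 0) u y + c2 * pd (0, 1) u y := by
  rw [show ((c1, c2) : ℝ × ℝ) = c1 • (1, 0) + c2 • (0, 1) by simp, map_add, map_smul, map_smul]
  rfl

theorem sub_diagQuad_add_smul_eq {c1 c2 A1 A2 : ℝ} (hc1 : c1 ≠ 0) (hc2 : c2 ≠ 0)
    {u : ℝ × ℝ → ℝ} (hu : Differentiable ℝ u)
    (hpde : ∀ y : ℝ × ℝ,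
      c1 * pd (1, 0) u y + c2 * pd (0, 1) u y = 2 * A1 * y.1 + 2 * A2 * y.2)
    (y : ℝ × ℝ) (s : ℝ) :
    (u - diagQuad (A1 / c1) (A2 / c2)) (y + s • (c1, c2)) =
      (u - diagQuad (A1 / c1) (A2 / c2)) y := by
  refine apply_add_smul_eq_of_fderiv_apply_eq_zero
    (hu.sub ((contDiff_diagQuad _ _).differentiable one_ne_zero)) (fun z => ?_) y s
  rw [fderiv_sub (hu z) ((contDiff_diagQuad _ _).differentiable one_ne_zero z),
    sub_apply, fderiv_apply_eq_pd, hpde, fderiv_diagQuad_apply]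
  field_simp
  ring

/-- A C² positively 2-homogeneous solution of the transport PDE is an explicit
quadratic polynomial. -/
theorem stmt10 (c1 c2 A1 A2 : ℝ) (hc1 : c1 ≠ 0) (hc2 : c2 ≠ 0)
    (u : ℝ × ℝ → ℝ) (hu : ContDiff ℝ 2 u)
    (hpde : ∀ y : ℝ × ℝ,
      c1 * pd (1, 0) u y + c2 * pd (0, 1) u y = 2 * A1 * y.1 + 2 * A2 * y.2)
    (hhom : ∀ t : ℝ, 0 < t → ∀ y : ℝ × ℝ, y ≠ 0 → u (t • y) = t ^ 2 * u y) :
    ∃ a : ℝ, ∀ y : ℝ × ℝ,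
      u y = (A1 / c1) * y.1 ^ 2 + (A2 / c2) * y.2 ^ 2
        + a * (c2 * y.1 - c1 * y.2) ^ 2 := by
  have hw : IsPosHomogeneous 2 (u - diagQuad (A1 / c1) (A2 / c2)) :=
    (IsPosHomogeneous.of_ne_zero hu.continuous two_ne_zero hhom).sub
      (isPosHomogeneous_diagQuad _ _)
  obtain ⟨a, haxis⟩ : ∃ a : ℝ, ∀ r : ℝ,
      (u - diagQuad (A1 / c1) (A2 / c2)) (r • (0, 1)) = a * r ^ 2 :=
    ⟨_, (hw.comp_smul_right (0, 1)).eq_mul_sq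
      ((hu.sub (contDiff_diagQuad _ _)).comp (by fun_prop))⟩
  refine ⟨a / c1 ^ 2, fun y => ?_⟩
  -- the characteristic through `y` meets the `y²`-axis at height `-(c²y¹ - c¹y²)/c¹`
  have hy : ((-(c2 * y.1 - c1 * y.2) / c1) • (0, 1) + (y.1 / c1) • (c1, c2) : ℝ × ℝ) = y := by
    ext
    · simp [hc1]
    · simp only [Prod.smul_mk, smul_eq_mul, mul_zero, mul_one, Prod.mk_add_mk, zero_add]
      field_simp
      ring
  have hchar := sub_diagQuad_add_smul_eq hc1 hc2 (hu.differentiable two_ne_zero) hpde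
    ((-(c2 * y.1 - c1 * y.2) / c1) • (0, 1)) (y.1 / c1)
  rw [haxis, hy] at hchar
  simp only [Pi.sub_apply, diagQuad] at hchar
  field_simp at hchar ⊢
  linarith
end
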